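/- arXiv:2105.06531 — 6 statements merged into one kernel-verified Lean document; each statement's English description precedes it below -/
import Mathlib

section
/- Let D = (D_1, ..., D_n) be a diagram, i.e., a sequence of finite subsets of {1,...,n}. Define rank(D) = sum over columns j and elements i in D_j of the number of k with 1 ≤ k ≤ i and k ∉ D_j. If D consists of a single nonempty column D_1 = {a_1 < ... < a_m} with rank(D) > 0, then there exists a column C_1 with C_1 ≤ D_1 (meaning the k-th least element of C_1 is at most the k-th least element of D_1 for each k, and |C_1| = |D_1|) and rank((C_1)) = rank((D_1)) - 1. -/
open Finset

/-! Positive rank forces a gap: some `a ≥ 1` lies outside `D₁` while `a + 1` lies in it. Moving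
that box from row `a + 1` to row `a`, i.e. applying the transposition `(a a+1)` to `D₁`, gives
`C₁ ≤ D₁`, since the transposition is strictly increasing on `D₁` and increases none of its
elements. Every other box `i` keeps its rank because `[1, i]` is invariant under the
transposition, while the moved box no longer counts the formerly empty row `a`. -/

/-- `colLE R S`: `R ≤ S` for columns, i.e. `|R| = |S|` and the `k`-th least element of `R`
does not exceed the `k`-th least element of `S` for each `k`. -/
def colLE {α : Type*} [LinearOrder α] (R S : Finset α) : Prop :=
  R.card = S.card ∧
  ∀ (k : ℕ) (hR : k < (R.sort (· ≤ ·)).length) (hS : k < (S.sort (· ≤ ·)).length),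
    (R.sort (· ≤ ·)).get ⟨k, hR⟩ ≤ (S.sort (· ≤ ·)).get ⟨k, hS⟩

/-- Rank of a single column `S ⊆ [n] = {1,…,n}`:
`Σ_{i ∈ S} #{k : 1 ≤ k ≤ i, k ∉ S}`. -/
def colRank (S : Finset ℕ) : ℕ :=
  ∑ i ∈ S, ((Finset.Icc 1 i).filter (fun k => k ∉ S)).card

theorem colLE_map_of_strictMonoOn {α : Type*} [LinearOrder α] {S : Finset α} (f : α ↪ α)
    (hf : StrictMonoOn f S) (hle : ∀ x ∈ S, f x ≤ x) : colLE (S.map f) S := by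
  refine ⟨card_map f, fun k hR hS => ?_⟩
  rw [List.get_of_eq hf.map_finsetSort.symm]
  simpa using hle _ ((mem_sort _).mp (List.getElem_mem hS))

theorem colRank_eq_sum_card_sdiff (S : Finset ℕ) : colRank S = ∑ i ∈ S, #(Icc 1 i \ S) := by
  simp only [colRank, filter_notMem_eq_sdiff]

theorem exists_notMem_succ_mem_of_colRank_pos {S : Finset ℕ} (h : 0 < colRank S) :
    ∃ a, 1 ≤ a ∧ a ∉ S ∧ a + 1 ∈ S := by
  obtain ⟨j, hj, hpos⟩ := sum_pos_iff.mp h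
  obtain ⟨k, hk⟩ := card_pos.mp hpos
  simp only [mem_filter, mem_Icc] at hk
  obtain ⟨⟨hk1, hkj⟩, hkS⟩ := hk
  by_contra! hgap
  have hup : ∀ m, k + m ∉ S := by
    intro m
    induction m with
    | zero => exact hkS
    | succ m ih => exact hgap (k + m) (by omega) ih
  exact hup (j - k) (by rwa [Nat.add_sub_cancel' hkj])

theorem map_swap_add_one_Icc {a b j : ℕ} (hb : b ≠ a + 1) (hj : j ≠ a) :
    (Icc b j).map (Equiv.swap a (a + 1)).toEmbedding = Icc b j := by
  ext x
  simp only [mem_map_equiv, Equiv.symm_swap, mem_Icc, Equiv.swap_apply_def]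
  split_ifs <;> omega

theorem card_Icc_sdiff_map_swap (S : Finset ℕ) {a b j : ℕ} (hb : b ≠ a + 1) (hj : j ≠ a) :
    #(Icc b j \ S.map (Equiv.swap a (a + 1)).toEmbedding) = #(Icc b j \ S) := by
  conv_lhs => rw [← map_swap_add_one_Icc hb hj, ← Finset.map_sdiff, card_map]

theorem colRank_map_swap_add_one {S : Finset ℕ} {a : ℕ} (ha : 1 ≤ a) (haS : a ∉ S)
    (hS : a + 1 ∈ S) :
    colRank (S.map (Equiv.swap a (a + 1)).toEmbedding) + 1 = colRank S := by
  set C := S.map (Equiv.swap a (a + 1)).toEmbedding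
  have hrest : ∑ x ∈ S.erase (a + 1), #(Icc 1 (Equiv.swap a (a + 1) x) \ C)
      = ∑ x ∈ S.erase (a + 1), #(Icc 1 x \ S) := by
    refine sum_congr rfl fun x hx => ?_
    have hxa : x ≠ a := ne_of_mem_of_not_mem (mem_of_mem_erase hx) haS
    rw [Equiv.swap_apply_of_ne_of_ne hxa (ne_of_mem_erase hx),
      card_Icc_sdiff_map_swap S (by omega) hxa]
  have hpeak : #(Icc 1 a \ C) + 1 = #(Icc 1 (a + 1) \ S) := by
    have hC : a + 1 ∉ C := by simpa [C] using haS
    rw [← card_Icc_sdiff_map_swap S (by omega) (by omega : a + 1 ≠ a),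
      ← insert_Icc_right_eq_Icc_add_one (by omega), insert_sdiff_of_notMem _ hC,
      card_insert_of_notMem (by simp)]
  rw [colRank_eq_sum_card_sdiff, colRank_eq_sum_card_sdiff, sum_map, Equiv.coe_toEmbedding,
    ← add_sum_erase _ _ hS, ← add_sum_erase _ _ hS, Equiv.swap_apply_right, hrest, ← hpeak]
  ring

theorem strictMonoOn_swap_add_one {S : Finset ℕ} {a : ℕ} (haS : a ∉ S) :
    StrictMonoOn (Equiv.swap a (a + 1)) S := by
  intro x hx y hy hxy
  have hxa : x ≠ a := ne_of_mem_of_not_mem hx haS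
  have hya : y ≠ a := ne_of_mem_of_not_mem hy haS
  simp only [Equiv.swap_apply_def]
  split_ifs <;> omega

theorem swap_add_one_le_self {S : Finset ℕ} {a : ℕ} (haS : a ∉ S) :
    ∀ x ∈ S, Equiv.swap a (a + 1) x ≤ x := by
  intro x hx
  have hxa : x ≠ a := ne_of_mem_of_not_mem hx haS
  rw [Equiv.swap_apply_def]
  split_ifs <;> omega

theorem stmt_0_general (n : ℕ) (D1 : Finset ℕ) (hsub : D1 ⊆ Finset.Icc 1 n)
    (hr : 0 < colRank D1) :
    ∃ C1 : Finset ℕ, C1 ⊆ Finset.Icc 1 n ∧ colLE C1 D1 ∧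
      colRank C1 = colRank D1 - 1 := by
  obtain ⟨a, ha, haD, hD⟩ := exists_notMem_succ_mem_of_colRank_pos hr
  have han : a + 1 ≤ n := (mem_Icc.mp (hsub hD)).2
  refine ⟨D1.map (Equiv.swap a (a + 1)).toEmbedding, ?_, ?_, ?_⟩
  · exact (map_subset_map.mpr hsub).trans (map_swap_add_one_Icc (by omega) (by omega)).le
  · exact colLE_map_of_strictMonoOn _ (strictMonoOn_swap_add_one haD) (swap_add_one_le_self haD)
  · have := colRank_map_swap_add_one ha haD hD
    omega

/-- If `D₁ ⊆ [n]` is a single nonempty column of positive rank, there is a column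
`C₁ ≤ D₁` with `rank((C₁)) = rank((D₁)) − 1`. -/
theorem stmt_0 (n : ℕ) (D1 : Finset ℕ) (hsub : D1 ⊆ Finset.Icc 1 n)
    (hne : D1.Nonempty) (hr : 0 < colRank D1) :
    ∃ C1 : Finset ℕ, C1 ⊆ Finset.Icc 1 n ∧ colLE C1 D1 ∧
      colRank C1 = colRank D1 - 1 :=
  stmt_0_general n D1 hsub hr
end

section
/- For any diagram D ⊆ [n] × [n], the number of distinct monomials x^C over all diagrams C with C ≤ D is at least rank(D) + 1. -/
/-!
Weight a diagram by the sum of the row indices of its boxes. This weight equals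
`∑ i, i * x^C(i)`, so it is read off the monomial `x^C`. In each column, weight minus rank
depends only on the number of boxes, so as long as the rank is positive some box sits directly
above an empty cell; moving it down one row gives a smaller diagram of weight one less.
Starting from `D`, this reaches diagrams `C ≤ D` of every weight `wt D - t` with
`t ≤ rank D`, and these have pairwise distinct monomials.
-/

open Finset

def diagLE {n : ℕ} (C D : Fin n → Finset ℕ) : Prop := ∀ j, colLE (C j) (D j)

def diagLT {n : ℕ} (C D : Fin n → Finset ℕ) : Prop := diagLE C D ∧ C ≠ D

def diagRank {n : ℕ} (D : Fin n → Finset ℕ) : ℕ := ∑ j, colRank (D j)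

def xMon {n : ℕ} (C : Fin n → Finset ℕ) : ℕ → ℕ :=
  fun i => (Finset.univ.filter (fun j => i ∈ C j)).card

namespace Finset

variable {α : Type*} [LinearOrder α]

theorem card_filter_le_orderEmbOfFin (S : Finset α) (k : Fin #S) :
    #{y ∈ S | y ≤ S.orderEmbOfFin rfl k} = k + 1 := by
  set f := S.orderEmbOfFin rfl
  calc #{y ∈ S | y ≤ f k} = #{y ∈ univ.image f | y ≤ f k} := by
        rw [image_orderEmbOfFin_univ]
    _ = #((Iic k).image f) := by simp only [filter_image, f.le_iff_le, filter_ge_eq_Iic]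
    _ = k + 1 := by rw [card_image_of_injective _ f.injective, Fin.card_Iic]

theorem sort_get_le_iff (S : Finset α) {k : ℕ} (hk : k < (S.sort (· ≤ ·)).length) (x : α) :
    (S.sort (· ≤ ·)).get ⟨k, hk⟩ ≤ x ↔ k < #{y ∈ S | y ≤ x} := by
  rw [length_sort] at hk
  change S.orderEmbOfFin rfl ⟨k, hk⟩ ≤ x ↔ _
  set a := S.orderEmbOfFin rfl ⟨k, hk⟩
  have hcard : #{y ∈ S | y ≤ a} = k + 1 := S.card_filter_le_orderEmbOfFin ⟨k, hk⟩
  constructor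
  · intro hax
    have hmono : #{y ∈ S | y ≤ a} ≤ #{y ∈ S | y ≤ x} :=
      card_le_card (monotone_filter_right S fun _ _ hy => hy.trans hax)
    omega
  · intro hlt
    by_contra! hxa
    have hsub : {y ∈ S | y ≤ x} ⊆ {y ∈ S | y ≤ a}.erase a := by
      intro y hy
      rw [mem_filter] at hy
      rw [mem_erase, mem_filter]
      exact ⟨(hy.2.trans_lt hxa).ne, hy.1, hy.2.trans hxa.le⟩
    have := card_le_card hsub
    rw [card_erase_of_mem (by simp [a]), hcard] at this
    omega

theorem sum_card_filter_le (S : Finset α) :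
    ∑ i ∈ S, #{y ∈ S | y ≤ i} = ∑ k ∈ range #S, (k + 1) := by
  set f := S.orderEmbOfFin rfl
  calc ∑ i ∈ S, #{y ∈ S | y ≤ i}
        = ∑ i ∈ univ.map f.toEmbedding, #{y ∈ S | y ≤ i} := by rw [map_orderEmbOfFin_univ]
    _ = ∑ k : Fin #S, (k + 1 : ℕ) := by
        rw [sum_map]; exact sum_congr rfl fun k _ => card_filter_le_orderEmbOfFin S k
    _ = ∑ k ∈ range #S, (k + 1) := Fin.sum_univ_eq_sum_range (· + 1) _

end Finset

section colLE

variable {α : Type*} [LinearOrder α]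

theorem colLE_iff {R S : Finset α} :
    colLE R S ↔ #R = #S ∧ ∀ x, #{y ∈ S | y ≤ x} ≤ #{y ∈ R | y ≤ x} := by
  refine ⟨fun h => ⟨h.1, fun x => ?_⟩, fun h => ⟨h.1, fun k hR hS => ?_⟩⟩
  · by_contra! hlt
    have hkR : #{y ∈ R | y ≤ x} < (R.sort (· ≤ ·)).length := by
      rw [length_sort, h.1]; exact hlt.trans_le (card_filter_le _ _)
    have hkS : #{y ∈ R | y ≤ x} < (S.sort (· ≤ ·)).length := by
      rw [length_sort]; exact hlt.trans_le (card_filter_le _ _)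
    have hSx := (S.sort_get_le_iff hkS x).2 hlt
    exact (((R.sort_get_le_iff hkR x).1 ((h.2 _ hkR hkS).trans hSx))).false
  · rw [R.sort_get_le_iff]
    exact ((S.sort_get_le_iff hS _).1 le_rfl).trans_le (h.2 _)

theorem colLE_trans {R S T : Finset α} (hRS : colLE R S) (hST : colLE S T) : colLE R T := by
  rw [colLE_iff] at *
  exact ⟨hRS.1.trans hST.1, fun x => (hST.2 x).trans (hRS.2 x)⟩

theorem colLE_insert_erase {S : Finset α} {a b : α} (hab : a < b) (hb : b ∈ S) (ha : a ∉ S) :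
    colLE (insert a (S.erase b)) S := by
  refine colLE_iff.2
    ⟨?_, fun x => card_le_card_of_injOn (Equiv.swap a b) ?_ (Equiv.injective _).injOn⟩
  · rw [card_insert_of_notMem fun h => ha (mem_of_mem_erase h), card_erase_add_one hb]
  · intro y hy
    rw [mem_coe, mem_filter] at hy ⊢
    obtain rfl | hyb := eq_or_ne y b
    · rw [Equiv.swap_apply_right]
      exact ⟨mem_insert_self _ _, hab.le.trans hy.2⟩
    · rw [Equiv.swap_apply_of_ne_of_ne (ne_of_mem_of_not_mem hy.1 ha) hyb]
      exact ⟨mem_insert_of_mem (mem_erase.2 ⟨hyb, hy.1⟩), hy.2⟩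

end colLE

theorem diagLE_refl {n : ℕ} (D : Fin n → Finset ℕ) : diagLE D D :=
  fun _ => ⟨rfl, fun _ _ _ => le_rfl⟩

theorem diagLE_trans {n : ℕ} {B C D : Fin n → Finset ℕ} (hBC : diagLE B C)
    (hCD : diagLE C D) : diagLE B D :=
  fun j => colLE_trans (hBC j) (hCD j)

theorem colRank_add_sum_range {S : Finset ℕ} (hS : 0 ∉ S) :
    colRank S + ∑ k ∈ range #S, (k + 1) = ∑ i ∈ S, i := by
  rw [← sum_card_filter_le, colRank, ← sum_add_distrib]
  refine sum_congr rfl fun i _ => ?_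
  have hbelow : {k ∈ Icc 1 i | k ∈ S} = {k ∈ S | k ≤ i} := by
    ext k
    simp only [mem_filter, mem_Icc]
    exact ⟨fun h => ⟨h.2, h.1.2⟩,
      fun h => ⟨⟨Nat.pos_of_ne_zero (ne_of_mem_of_not_mem h.1 hS), h.2⟩, h.1⟩⟩
  rw [← hbelow, add_comm, card_filter_add_card_filter_not, Nat.card_Icc, Nat.add_sub_cancel]

theorem exists_mem_sub_one_notMem {S : Finset ℕ} {k i : ℕ} (hk : k ∉ S) (hki : k < i)
    (hi : i ∈ S) : ∃ j ∈ S, k < j ∧ j - 1 ∉ S := by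
  induction i with
  | zero => omega
  | succ i ih =>
    by_cases h : i ∈ S
    · exact ih (lt_of_le_of_ne (Nat.lt_succ_iff.1 hki) fun e => hk (e ▸ h)) h
    · exact ⟨i + 1, hi, hki, h⟩

theorem exists_colLE_sum_add_one {n : ℕ} {S : Finset ℕ} (hS : S ⊆ Icc 1 n)
    (hrank : 0 < colRank S) :
    ∃ R ⊆ Icc 1 n, colLE R S ∧ ∑ i ∈ R, i + 1 = ∑ i ∈ S, i := by
  obtain ⟨i, hi, hgaps⟩ := sum_pos_iff.1 hrank
  obtain ⟨k, hk⟩ := card_pos.1 hgaps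
  rw [mem_filter, mem_Icc] at hk
  obtain ⟨j, hj, hkj, hgap⟩ :=
    exists_mem_sub_one_notMem hk.2 (lt_of_le_of_ne hk.1.2 fun e => hk.2 (e ▸ hi)) hi
  have hjn := mem_Icc.1 (hS hj)
  refine ⟨insert (j - 1) (S.erase j), insert_subset (mem_Icc.2 (by omega))
      ((erase_subset _ _).trans hS), colLE_insert_erase (by omega) hj hgap, ?_⟩
  rw [sum_insert fun h => hgap (mem_of_mem_erase h), ← add_sum_erase _ _ hj]
  omega

def diagWeight {n : ℕ} (C : Fin n → Finset ℕ) : ℕ := ∑ j, ∑ i ∈ C j, i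

theorem sum_mul_xMon {n : ℕ} {C : Fin n → Finset ℕ} {s : Finset ℕ} (hC : ∀ j, C j ⊆ s)
    (f : ℕ → ℕ) : ∑ i ∈ s, f i * xMon C i = ∑ j, ∑ i ∈ C j, f i := by
  simp only [xMon, card_filter, mul_sum, mul_ite, mul_one, mul_zero]
  rw [sum_comm]
  refine sum_congr rfl fun j _ => ?_
  rw [sum_ite_mem, inter_eq_right.2 (hC j)]

theorem diagWeight_update_add {n : ℕ} (C : Fin n → Finset ℕ) (j : Fin n) (R : Finset ℕ) :
    diagWeight (Function.update C j R) + ∑ i ∈ C j, i = diagWeight C + ∑ i ∈ R, i := by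
  simp only [diagWeight, Function.apply_update (fun _ S => ∑ i ∈ S, i),
    sum_update_of_mem (mem_univ j),
    sum_eq_add_sum_sdiff_singleton_of_mem (mem_univ j) fun j => ∑ i ∈ C j, i]
  ring

theorem diagRank_add_sum_range {n : ℕ} {C : Fin n → Finset ℕ} (hC : ∀ j, 0 ∉ C j) :
    diagRank C + ∑ j, ∑ k ∈ range #(C j), (k + 1) = diagWeight C := by
  rw [diagRank, diagWeight, ← sum_add_distrib]
  exact sum_congr rfl fun j _ => colRank_add_sum_range (hC j)

theorem exists_diagLE_weight_add_one {n : ℕ} {C : Fin n → Finset ℕ}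
    (hC : ∀ j, C j ⊆ Icc 1 n) (hrank : 0 < diagRank C) :
    ∃ C', (∀ j, C' j ⊆ Icc 1 n) ∧ diagLE C' C ∧ diagWeight C' + 1 = diagWeight C := by
  obtain ⟨j, -, hj⟩ := sum_pos_iff.1 hrank
  obtain ⟨R, hRn, hRC, hRsum⟩ := exists_colLE_sum_add_one (hC j) hj
  refine ⟨Function.update C j R,
    (Function.forall_update_iff C (p := fun _ S => S ⊆ Icc 1 n)).2 ⟨hRn, fun j' _ => hC j'⟩,
    (Function.forall_update_iff C (p := fun j' S => colLE S (C j'))).2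
      ⟨hRC, fun j' _ => diagLE_refl C j'⟩, ?_⟩
  have := diagWeight_update_add C j R
  omega

theorem exists_diagLE_weight_add_eq {n : ℕ} {D : Fin n → Finset ℕ}
    (hD : ∀ j, D j ⊆ Icc 1 n) {t : ℕ} (ht : t ≤ diagRank D) :
    ∃ C, (∀ j, C j ⊆ Icc 1 n) ∧ diagLE C D ∧ diagWeight C + t = diagWeight D := by
  induction t with
  | zero => exact ⟨D, hD, diagLE_refl D, rfl⟩
  | succ t ih =>
    obtain ⟨C, hC, hCD, hwt⟩ := ih (by omega)
    have hpos : ∀ {B : Fin n → Finset ℕ}, (∀ j, B j ⊆ Icc 1 n) → ∀ j, 0 ∉ B j :=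
      fun hB j h => by simpa using hB j h
    -- weight minus rank only depends on the column sizes, which `diagLE` preserves
    have hrank : diagRank C + t = diagRank D := by
      have hC' := diagRank_add_sum_range (hpos hC)
      have hD' := diagRank_add_sum_range (hpos hD)
      simp only [fun j => (hCD j).1] at hC'
      omega
    obtain ⟨C', hC', hC'C, hwt'⟩ := exists_diagLE_weight_add_one hC (by omega)
    exact ⟨C', hC', diagLE_trans hC'C hCD, by omega⟩

/-- The number of distinct monomials `x^C` over diagrams `C ≤ D` is at least `rank(D) + 1`. -/
theorem stmt_4 (n : ℕ) (D : Fin n → Finset ℕ) (hD : ∀ j, D j ⊆ Finset.Icc 1 n) :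
    Set.ncard {m : ℕ → ℕ | ∃ C : Fin n → Finset ℕ,
        (∀ j, C j ⊆ Finset.Icc 1 n) ∧ diagLE C D ∧ xMon C = m}
      ≥ diagRank D + 1 := by
  set M := {m : ℕ → ℕ | ∃ C : Fin n → Finset ℕ,
    (∀ j, C j ⊆ Finset.Icc 1 n) ∧ diagLE C D ∧ xMon C = m}
  have hfin : M.Finite := by
    refine ((Set.Finite.pi fun _ : Fin n => (Icc 1 n).powerset.finite_toSet).image xMon).subset ?_
    rintro m ⟨C, hC, -, rfl⟩
    exact ⟨C, fun j _ => mem_powerset.2 (hC j), rfl⟩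
  let drop : (ℕ → ℕ) → ℕ := fun m => diagWeight D - ∑ i ∈ Icc 1 n, i * m i
  have hcover : Set.Iic (diagRank D) ⊆ drop '' M := by
    intro t ht
    obtain ⟨C, hC, hCD, hwt⟩ := exists_diagLE_weight_add_eq hD ht
    refine ⟨xMon C, ⟨C, hC, hCD, rfl⟩, ?_⟩
    simp only [drop, sum_mul_xMon hC]
    change diagWeight D - diagWeight C = t
    omega
  calc diagRank D + 1 = (Set.Iic (diagRank D)).ncard := (Set.ncard_Iic_nat _).symm
    _ ≤ (drop '' M).ncard := Set.ncard_le_ncard hcover (hfin.image drop)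
    _ ≤ M.ncard := Set.ncard_image_le hfin
end

section
/- For any permutation w ∈ S_n with Rothe diagram D(w), the number of 132-patterns in w equals rank(D(w)). Here a 132-pattern is a triple of indices a < b < c with w(a) < w(c) < w(b). -/
/-! Unfolding the rank, `rank(D(w))` counts triples of a box `(i, j) ∈ D(w)` and a row `k ≤ i`
whose cell `(k, j)` lies outside `D(w)`. Writing `j = w c`, such a triple is the same thing as a
132-pattern `k < i < c`: the box gives `i < c` and `w c < w i`, and the empty cell above it,
in a row `k < c`, forces `w k < w c`, which in turn rules out `k = i`. -/

open Finset

/-- The Rothe diagram of `w` (0-indexed): `{(i,j) : i < w⁻¹(j), j < w(i)}`. -/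
def rothe {n : ℕ} (w : Equiv.Perm (Fin n)) : Finset (Fin n × Fin n) :=
  Finset.univ.filter (fun p => p.1 < w⁻¹ p.2 ∧ p.2 < w p.1)

/-- Rank of a diagram given as a set of boxes (0-indexed):
`Σ_{(i,j) ∈ D} #{k ≤ i : (k,j) ∉ D}`. -/
def rankF {n : ℕ} (D : Finset (Fin n × Fin n)) : ℕ :=
  ∑ p ∈ D, (Finset.univ.filter (fun k => k ≤ p.1 ∧ (k, p.2) ∉ D)).card

/-- The number of 132-patterns of `w`: triples `a < b < c` with `w a < w c < w b`. -/
def p132 {n : ℕ} (w : Equiv.Perm (Fin n)) : ℕ :=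
  (Finset.univ.filter (fun t : Fin n × Fin n × Fin n =>
    t.1 < t.2.1 ∧ t.2.1 < t.2.2 ∧ w t.1 < w t.2.2 ∧ w t.2.2 < w t.2.1)).card

section

variable {n : ℕ}

lemma mem_rothe {w : Equiv.Perm (Fin n)} {i j : Fin n} :
    (i, j) ∈ rothe w ↔ i < w⁻¹ j ∧ j < w i := by
  simp [rothe]

lemma rankF_eq_card (D : Finset (Fin n × Fin n)) :
    rankF D = #{q : (Fin n × Fin n) × Fin n | q.1 ∈ D ∧ q.2 ≤ q.1.1 ∧ (q.2, q.1.2) ∉ D} := by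
  rw [rankF, card_filter, Fintype.sum_prod_type]
  simp [ite_and, card_filter]

lemma mem_rothe_and_not_mem_rothe_iff {w : Equiv.Perm (Fin n)} {a b c : Fin n} :
    ((b, w c) ∈ rothe w ∧ a ≤ b ∧ (a, w c) ∉ rothe w) ↔
      a < b ∧ b < c ∧ w a < w c ∧ w c < w b := by
  simp only [mem_rothe, Equiv.Perm.coe_inv, Equiv.symm_apply_apply, not_and, not_lt]
  constructor
  · rintro ⟨⟨hbc, hcb⟩, hab, hcol⟩
    have hac : w a ≤ w c := hcol (hab.trans_lt hbc)
    have hab' : a ≠ b := by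
      rintro rfl
      exact absurd hcb (not_lt.mpr hac)
    have hac' : w a ≠ w c := w.injective.ne (hab.trans_lt hbc).ne
    exact ⟨hab.lt_of_ne hab', hbc, hac.lt_of_ne hac', hcb⟩
  · rintro ⟨hab, hbc, hac, hcb⟩
    exact ⟨⟨hbc, hcb⟩, hab.le, fun _ => hac.le⟩

end

/-- The number of 132-patterns of `w` equals the rank of its Rothe diagram. -/
theorem stmt_5 (n : ℕ) (w : Equiv.Perm (Fin n)) : p132 w = rankF (rothe w) := by
  let e : Fin n × Fin n × Fin n ≃ (Fin n × Fin n) × Fin n :=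
    { toFun := fun t => ((t.2.1, w t.2.2), t.1)
      invFun := fun q => (q.2, q.1.1, w⁻¹ q.1.2)
      left_inv := fun t => by simp
      right_inv := fun q => by simp }
  rw [p132, rankF_eq_card]
  refine card_equiv e fun ⟨a, b, c⟩ => ?_
  simp only [mem_filter, mem_univ, true_and, e, Equiv.coe_fn_mk, mem_rothe_and_not_mem_rothe_iff]
end

section
/- For any permutation w ∈ S_n, 132-patterns of w are in bijection with triples (i, j, k) such that (i,j) ∈ D(w), 1 ≤ k < i, and (k,j) ∉ D(w), where D(w) is the Rothe diagram of w. -/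
/-!
A 132-pattern `a < b < c` is sent to the triple `(b, w c, a)`: the box `(b, w c)` lies in the
Rothe diagram exactly because `b < c` and `w c < w b`, and the box `(a, w c)` above it is missing
exactly because `w a < w c`. Conversely `(i, j, k)` comes from the pattern `(k, i, w⁻¹ j)`.
-/

open Finset

section Rothe

variable {n : ℕ} (w : Equiv.Perm (Fin n))

lemma mem_rothe_iff (i j : Fin n) : (i, j) ∈ rothe w ↔ i < w⁻¹ j ∧ j < w i := by
  simp [rothe]

variable {w}

lemma notMem_rothe_iff_of_lt_inv_apply {k j : Fin n} (hk : k < w⁻¹ j) :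
    (k, j) ∉ rothe w ↔ w k < j := by
  rw [mem_rothe_iff, not_and, not_lt]
  refine ⟨fun h => (h hk).lt_of_ne ?_, fun h _ => h.le⟩
  rintro rfl
  simp at hk

end Rothe

/-- 132-patterns of `w` are in bijection with triples `(i,j,k)` with
`(i,j) ∈ D(w)`, `k < i`, and `(k,j) ∉ D(w)`. -/
theorem stmt_6 (n : ℕ) (w : Equiv.Perm (Fin n)) :
    ∃ f : Fin n × Fin n × Fin n → Fin n × Fin n × Fin n,
      Set.BijOn f
        {t | t.1 < t.2.1 ∧ t.2.1 < t.2.2 ∧ w t.1 < w t.2.2 ∧ w t.2.2 < w t.2.1}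
        {t | (t.1, t.2.1) ∈ rothe w ∧ t.2.2 < t.1 ∧ (t.2.2, t.2.1) ∉ rothe w} := by
  refine ⟨fun t => (t.2.1, w t.2.2, t.1),
    Set.InvOn.bijOn (f' := fun t => (t.2.2, t.1, w⁻¹ t.2.1))
      ⟨fun t _ => by simp, fun t _ => by simp⟩ ?_ ?_⟩
  · rintro ⟨a, b, c⟩ ⟨hab, hbc, hac, hcb⟩
    have hbc' : b < w⁻¹ (w c) := by simpa using hbc
    exact ⟨(mem_rothe_iff w b (w c)).2 ⟨hbc', hcb⟩, hab,
      (notMem_rothe_iff_of_lt_inv_apply (hab.trans hbc')).2 hac⟩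
  · rintro ⟨i, j, k⟩ ⟨hij, hki, hkj⟩
    rw [mem_rothe_iff] at hij
    refine ⟨hki, hij.1, ?_, by simpa using hij.2⟩
    simpa using (notMem_rothe_iff_of_lt_inv_apply (hki.trans hij.1)).1 hkj
end

section
/- Let α be a composition and D(α) its skyline diagram, containing the leftmost α_i boxes in row i. Then rank(D(α)) = Σ_{(i,j) ∈ rinv(α)} (α_j − α_i), where rinv(α) is the set of pairs i < j with α_i < α_j. -/
open Finset

/-- Rank of a diagram given as a set of boxes in `[n] × [n]` (1-indexed):
`Σ_{(i,j) ∈ D} #{k : 1 ≤ k ≤ i, (k,j) ∉ D}`. -/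
def rankB (D : Finset (ℕ × ℕ)) : ℕ :=
  ∑ p ∈ D, ((Finset.Icc 1 p.1).filter (fun k => (k, p.2) ∉ D)).card

/-- The skyline diagram of a composition `α` inside `[n] × [n]`: box `(i,j)` iff `j ≤ α i`. -/
def skyline (α : ℕ → ℕ) (n : ℕ) : Finset (ℕ × ℕ) :=
  (Finset.Icc 1 n ×ˢ Finset.Icc 1 n).filter (fun p => p.2 ≤ α p.1)

/-! Count the triples `k ≤ i`, `α k < j ≤ α i`: grouped by the box `(i, j)` they give the rank of
`D(α)`, grouped by the rows `k ≤ i` they give `Σ_{k ≤ i} (α i - α k)`, and in this sum only the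
pairs of `rinv(α)` contribute, the others giving a truncated difference `0`. -/

section Skyline

variable {α : ℕ → ℕ} {n : ℕ}

theorem sum_skyline {M : Type*} [AddCommMonoid M] (hb : ∀ i, α i ≤ n) (g : ℕ × ℕ → M) :
    ∑ p ∈ skyline α n, g p = ∑ i ∈ Icc 1 n, ∑ j ∈ Icc 1 (α i), g (i, j) := by
  rw [skyline, sum_filter, sum_product]
  refine sum_congr rfl fun i _ => ?_
  rw [← sum_filter]
  congr 1
  ext j
  simp only [mem_filter, mem_Icc]
  have := hb i
  omega

theorem notMem_skyline_iff {k j : ℕ} (hk : k ∈ Icc 1 n)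
    (hj : j ∈ Icc 1 n) : (k, j) ∉ skyline α n ↔ α k < j := by
  simp [skyline, mem_Icc.mp hk, mem_Icc.mp hj]

theorem rankB_skyline (hb : ∀ i, α i ≤ n) :
    rankB (skyline α n) = ∑ i ∈ Icc 1 n, ∑ k ∈ Icc 1 i, (α i - α k) := by
  rw [rankB, sum_skyline hb]
  refine sum_congr rfl fun i hi => ?_
  have hi := mem_Icc.mp hi
  calc ∑ j ∈ Icc 1 (α i), #{k ∈ Icc 1 i | (k, j) ∉ skyline α n}
      = ∑ j ∈ Icc 1 (α i), #{k ∈ Icc 1 i | α k < j} := by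
        refine sum_congr rfl fun j hj => congrArg card <| filter_congr fun k hk => ?_
        have hj := mem_Icc.mp hj
        have hk := mem_Icc.mp hk
        exact notMem_skyline_iff (mem_Icc.mpr ⟨hk.1, hk.2.trans hi.2⟩)
          (mem_Icc.mpr ⟨hj.1, hj.2.trans (hb i)⟩)
    _ = ∑ k ∈ Icc 1 i, #{j ∈ Icc 1 (α i) | α k < j} :=
        sum_card_bipartiteAbove_eq_sum_card_bipartiteBelow (fun j k => α k < j)
    _ = ∑ k ∈ Icc 1 i, (α i - α k) := by
        refine sum_congr rfl fun k _ => ?_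
        rw [← Nat.card_Ioc]
        congr 1
        ext j
        simp only [mem_filter, mem_Icc, mem_Ioc]
        omega

end Skyline

theorem sum_Icc_sum_Icc_tsub_eq_sum_rinv (f : ℕ → ℕ) (n : ℕ) :
    ∑ i ∈ Icc 1 n, ∑ k ∈ Icc 1 i, (f i - f k) =
      ∑ p ∈ (Icc 1 n ×ˢ Icc 1 n).filter (fun p => p.1 < p.2 ∧ f p.1 < f p.2),
        (f p.2 - f p.1) := by
  have hpairs : ∑ i ∈ Icc 1 n, ∑ k ∈ Icc 1 i, (f i - f k) =
      ∑ p ∈ (Icc 1 n ×ˢ Icc 1 n).filter (fun p => p.1 ≤ p.2), (f p.2 - f p.1) := by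
    rw [sum_filter, sum_product_right]
    refine sum_congr rfl fun i hi => ?_
    rw [← sum_filter]
    congr 1
    ext k
    simp only [mem_filter, mem_Icc] at hi ⊢
    omega
  have hrinv : (Icc 1 n ×ˢ Icc 1 n).filter (fun p => p.1 < p.2 ∧ f p.1 < f p.2) =
      ((Icc 1 n ×ˢ Icc 1 n).filter (fun p => p.1 ≤ p.2)).filter
        (fun p => p.1 < p.2 ∧ f p.1 < f p.2) := by
    rw [filter_filter]
    exact filter_congr fun p _ => by omega
  rw [hpairs, hrinv]
  refine (sum_filter_of_ne fun p hp hne => ?_).symm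
  rcases (mem_filter.mp hp).2.eq_or_lt with hdiag | hlt
  · simp [hdiag] at hne
  · omega

theorem stmt_7_general (α : ℕ → ℕ) (n : ℕ)
    (hb : ∀ i, α i ≤ n) :
    rankB (skyline α n) =
      ∑ p ∈ (Finset.Icc 1 n ×ˢ Finset.Icc 1 n).filter
          (fun p => p.1 < p.2 ∧ α p.1 < α p.2), (α p.2 - α p.1) := by
  rw [rankB_skyline hb, sum_Icc_sum_Icc_tsub_eq_sum_rinv]

/-- `rank(D(α)) = Σ_{(i,j) ∈ rinv(α)} (α_j − α_i)`. -/
theorem stmt_7 (α : ℕ → ℕ) (l n : ℕ) (hl : l ≤ n)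
    (hb : ∀ i, α i ≤ n) (h0 : ∀ i, i ∉ Finset.Icc 1 l → α i = 0) :
    rankB (skyline α n) =
      ∑ p ∈ (Finset.Icc 1 n ×ˢ Finset.Icc 1 n).filter
          (fun p => p.1 < p.2 ∧ α p.1 < α p.2), (α p.2 - α p.1) :=
  stmt_7_general α n hb
end

section
/- Let D be a diagram in which all boxes of positive rank lie in a single column j, and each such box has rank exactly 1. Then for each k = 0, 1, ..., rank(D) there is exactly one diagram C ≤ D with rank(C) = k; in particular the number of diagrams C ≤ D equals rank(D) + 1. -/
open Finset

/-!
Write a column `S` with `m` boxes as `s₀ < ⋯ < s_{m-1}`. As `0 ∉ S`, the box `s_k` has rank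
`s_k - (k + 1)`, so box ranks increase up the column and `colRank S` is their sum. If `C ≤ S`
then `c_k ≤ s_k`, so each box of `C` has rank at most that of the matching box of `S`. When these
ranks are all `0` or `1` they form a monotone `0/1` sequence, which is determined by its sum:
thus every `C ≤ S` equals `canonCol m (colRank C)` with `colRank C ≤ colRank S`, and conversely
each `canonCol m t` with `t ≤ colRank S` lies below `S`. Hence a rank-zero column dominates
only itself, and the diagrams `C ≤ D` are `D` with column `j₀` replaced by `canonCol m t`, of
rank `t`, for `t = 0, …, rank D`.
-/

lemma Fin.eq_ite_of_monotone_of_le_one {m : ℕ} {f : Fin m → ℕ} (hf : Monotone f)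
    (hf1 : ∀ i, f i ≤ 1) (k : Fin m) : f k = if m ≤ k + ∑ i, f i then 1 else 0 := by
  rcases Nat.le_one_iff_eq_zero_or_eq_one.mp (hf1 k) with hk | hk
  · have hsum : ∑ i, f i ≤ m - 1 - k := calc
      ∑ i, f i = ∑ i ∈ Ioi k, f i := by
        refine (sum_subset (subset_univ _) fun i _ hi => ?_).symm
        exact Nat.eq_zero_of_le_zero (hk ▸ hf (not_lt.mp (by simpa using hi)))
      _ ≤ #(Ioi k) := by
        simpa only [smul_eq_mul, mul_one] using sum_le_card_nsmul (Ioi k) f 1 fun i _ => hf1 i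
      _ = m - 1 - k := Fin.card_Ioi k
    rw [hk, if_neg (by omega)]
  · have hsum : m - k ≤ ∑ i, f i := calc
      m - k = #(Ici k) := (Fin.card_Ici k).symm
      _ ≤ ∑ i ∈ Ici k, f i := by
        simpa only [smul_eq_mul, mul_one] using
          card_nsmul_le_sum (Ici k) f 1 fun i hi => hk ▸ hf (mem_Ici.mp hi)
      _ ≤ ∑ i, f i := sum_le_sum_of_subset (subset_univ _)
    rw [hk, if_pos (by omega)]

lemma colLE_iff_orderEmbOfFin_le {α : Type*} [LinearOrder α] {C S : Finset α} {m : ℕ}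
    (hC : #C = m) (hS : #S = m) : colLE C S ↔ ∀ k, C.orderEmbOfFin hC k ≤ S.orderEmbOfFin hS k := by
  simp only [colLE, orderEmbOfFin_apply, List.get_eq_getElem, length_sort, hC, hS, true_and]
  exact ⟨fun h k => h k k.2 k.2, fun h k hk _ => h ⟨k, hk⟩⟩

/-- The paper's `rank_D(i, j)` for the column `S = D_j`. -/
def boxRank (S : Finset ℕ) (i : ℕ) : ℕ := #{k ∈ Icc 1 i | k ∉ S}

lemma boxRank_mono (S : Finset ℕ) : Monotone (boxRank S) :=
  fun _ _ h => card_le_card (filter_subset_filter _ (Icc_subset_Icc_right h))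

lemma card_filter_le_orderEmbOfFin {α : Type*} [LinearOrder α] (S : Finset α) {m : ℕ}
    (hS : #S = m) (k : Fin m) : #{x ∈ S | x ≤ S.orderEmbOfFin hS k} = k + 1 := by
  rw [← Fin.card_Iic k, ← card_map (S.orderEmbOfFin hS).toEmbedding]
  congr 1
  ext x
  simp only [mem_filter, mem_map, mem_Iic, RelEmbedding.coe_toEmbedding]
  constructor
  · rintro ⟨hx, hle⟩
    obtain ⟨j, rfl⟩ : x ∈ Set.range (S.orderEmbOfFin hS) := by simpa using hx
    exact ⟨j, (S.orderEmbOfFin hS).le_iff_le.mp hle, rfl⟩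
  · rintro ⟨j, hj, rfl⟩
    exact ⟨orderEmbOfFin_mem S hS j, (S.orderEmbOfFin hS).le_iff_le.mpr hj⟩

section Column

variable {S C : Finset ℕ} {m : ℕ}

lemma boxRank_orderEmbOfFin_add (h0 : 0 ∉ S) (hS : #S = m) (k : Fin m) :
    boxRank S (S.orderEmbOfFin hS k) + (k + 1) = S.orderEmbOfFin hS k := by
  set a := S.orderEmbOfFin hS k
  have hS_le : {x ∈ Icc 1 a | x ∈ S} = {x ∈ S | x ≤ a} := by
    ext x
    simp only [mem_filter, mem_Icc]
    have hx1 : x ∈ S → 1 ≤ x := fun hx => Nat.one_le_iff_ne_zero.mpr (ne_of_mem_of_not_mem hx h0)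
    exact ⟨fun ⟨⟨_, hxa⟩, hx⟩ => ⟨hx, hxa⟩, fun ⟨hx, hxa⟩ => ⟨⟨hx1 hx, hxa⟩, hx⟩⟩
  rw [boxRank, ← card_filter_le_orderEmbOfFin S hS k, ← hS_le, add_comm,
    card_filter_add_card_filter_not, Nat.card_Icc, Nat.add_sub_cancel]

lemma colRank_eq_sum_orderEmbOfFin (S : Finset ℕ) (hS : #S = m) :
    colRank S = ∑ k, boxRank S (S.orderEmbOfFin hS k) := by
  calc colRank S = ∑ i ∈ univ.map (S.orderEmbOfFin hS).toEmbedding, boxRank S i := by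
        rw [map_orderEmbOfFin_univ]; rfl
    _ = _ := sum_map _ _ _

lemma colRank_le_card (h1 : ∀ i ∈ S, boxRank S i ≤ 1) : colRank S ≤ #S :=
  (sum_le_card_nsmul S (boxRank S) 1 h1).trans_eq (smul_eq_mul _ _ |>.trans (mul_one _))

lemma boxRank_orderEmbOfFin_le_of_colLE (h0C : 0 ∉ C) (h0S : 0 ∉ S) (h : colLE C S)
    (hC : #C = m) (hS : #S = m) (k : Fin m) :
    boxRank C (C.orderEmbOfFin hC k) ≤ boxRank S (S.orderEmbOfFin hS k) := by
  have := (colLE_iff_orderEmbOfFin_le hC hS).mp h k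
  have := boxRank_orderEmbOfFin_add h0C hC k
  have := boxRank_orderEmbOfFin_add h0S hS k
  omega

lemma colRank_le_of_colLE (h0C : 0 ∉ C) (h0S : 0 ∉ S) (h : colLE C S) :
    colRank C ≤ colRank S := by
  rw [colRank_eq_sum_orderEmbOfFin C h.1, colRank_eq_sum_orderEmbOfFin S rfl]
  exact sum_le_sum fun k _ => boxRank_orderEmbOfFin_le_of_colLE h0C h0S h h.1 rfl k

lemma boxRank_le_one_of_colLE (h0C : 0 ∉ C) (h0S : 0 ∉ S) (hS1 : ∀ i ∈ S, boxRank S i ≤ 1)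
    (h : colLE C S) : ∀ i ∈ C, boxRank C i ≤ 1 := by
  intro i hi
  obtain ⟨k, rfl⟩ : i ∈ Set.range (C.orderEmbOfFin h.1) := by simpa using hi
  exact (boxRank_orderEmbOfFin_le_of_colLE h0C h0S h h.1 rfl k).trans
    (hS1 _ (orderEmbOfFin_mem S rfl k))

lemma subset_Icc_of_colLE {n : ℕ} (h0C : 0 ∉ C) (h : colLE C S) (hS : S ⊆ Icc 1 n) :
    C ⊆ Icc 1 n := by
  intro i hi
  obtain ⟨k, rfl⟩ : i ∈ Set.range (C.orderEmbOfFin h.1) := by simpa using hi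
  have hle := (colLE_iff_orderEmbOfFin_le h.1 rfl).mp h k
  have hn := (mem_Icc.mp (hS (orderEmbOfFin_mem S rfl k))).2
  exact mem_Icc.mpr ⟨Nat.one_le_iff_ne_zero.mpr (ne_of_mem_of_not_mem hi h0C), hle.trans hn⟩

lemma orderEmbOfFin_eq_of_boxRank_le_one (h0 : 0 ∉ S) (h1 : ∀ i ∈ S, boxRank S i ≤ 1)
    (hS : #S = m) (k : Fin m) :
    S.orderEmbOfFin hS k = k + 1 + if m ≤ k + colRank S then 1 else 0 := by
  have hmono : Monotone fun k => boxRank S (S.orderEmbOfFin hS k) :=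
    (boxRank_mono S).comp (S.orderEmbOfFin hS).monotone
  have h01 := Fin.eq_ite_of_monotone_of_le_one hmono (fun i => h1 _ (orderEmbOfFin_mem S hS i)) k
  rw [← colRank_eq_sum_orderEmbOfFin S hS] at h01
  rw [← boxRank_orderEmbOfFin_add h0 hS k, h01]
  ring

end Column

def canonEntry (m t : ℕ) (k : Fin m) : ℕ := k + 1 + if m ≤ k + t then 1 else 0

lemma strictMono_canonEntry (m t : ℕ) : StrictMono (canonEntry m t) := by
  intro i j hij
  have : (i : ℕ) < j := hij
  simp only [canonEntry]
  split_ifs <;> omega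

/-- For `t ≤ m`, `canonCol m t = {1, …, m+1} \ {m+1-t}`: a column of `m` boxes whose top `t`
boxes have rank one. -/
def canonCol (m t : ℕ) : Finset ℕ := univ.image (canonEntry m t)

section CanonCol

variable {S : Finset ℕ} {m t : ℕ}

lemma card_canonCol : #(canonCol m t) = m := by
  rw [canonCol, card_image_of_injective _ (strictMono_canonEntry m t).injective, card_univ,
    Fintype.card_fin]

lemma orderEmbOfFin_canonCol : ⇑((canonCol m t).orderEmbOfFin card_canonCol) = canonEntry m t :=
  (orderEmbOfFin_unique _ (fun k => mem_image_of_mem _ (mem_univ k))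
    (strictMono_canonEntry m t)).symm

lemma zero_notMem_canonCol : 0 ∉ canonCol m t := by
  simp [canonCol, canonEntry]

lemma colRank_canonCol (ht : t ≤ m) : colRank (canonCol m t) = t := by
  have hbox : ∀ k, boxRank (canonCol m t) (canonEntry m t k) = if m ≤ k + t then 1 else 0 := by
    intro k
    have h := boxRank_orderEmbOfFin_add (zero_notMem_canonCol (t := t)) card_canonCol k
    rw [orderEmbOfFin_canonCol] at h
    have : canonEntry m t k = k + 1 + if m ≤ k + t then 1 else 0 := rfl
    omega
  have hfilter : {k ∈ range m | m ≤ k + t} = Ico (m - t) m := by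
    ext k
    simp only [mem_filter, mem_range, mem_Ico]
    omega
  rw [colRank_eq_sum_orderEmbOfFin _ card_canonCol, orderEmbOfFin_canonCol]
  simp only [hbox]
  rw [Fin.sum_univ_eq_sum_range (fun k => if m ≤ k + t then 1 else 0), sum_boole, hfilter,
    Nat.card_Ico, Nat.cast_id]
  omega

lemma eq_canonCol (h0 : 0 ∉ S) (h1 : ∀ i ∈ S, boxRank S i ≤ 1) :
    S = canonCol #S (colRank S) := by
  conv_lhs => rw [← image_orderEmbOfFin_univ S rfl]
  exact congrArg (univ.image ·) (funext (orderEmbOfFin_eq_of_boxRank_le_one h0 h1 rfl))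

lemma colLE_canonCol (h0 : 0 ∉ S) (h1 : ∀ i ∈ S, boxRank S i ≤ 1) (ht : t ≤ colRank S) :
    colLE (canonCol #S t) S := by
  rw [colLE_iff_orderEmbOfFin_le card_canonCol rfl]
  intro k
  rw [orderEmbOfFin_canonCol, orderEmbOfFin_eq_of_boxRank_le_one h0 h1 rfl k, canonEntry]
  split_ifs <;> omega

end CanonCol

lemma eq_of_colLE_of_colRank_eq {S C : Finset ℕ} (h0C : 0 ∉ C) (h0S : 0 ∉ S)
    (hS1 : ∀ i ∈ S, boxRank S i ≤ 1) (h : colLE C S) (hr : colRank C = colRank S) : C = S :=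
  calc C = canonCol #C (colRank C) := eq_canonCol h0C (boxRank_le_one_of_colLE h0C h0S hS1 h)
    _ = canonCol #S (colRank S) := by rw [h.1, hr]
    _ = S := (eq_canonCol h0S hS1).symm

section Diagram

variable {n : ℕ} {C D : Fin n → Finset ℕ} {j0 : Fin n}

lemma diagRank_eq_colRank (h : ∀ j ≠ j0, colRank (D j) = 0) : diagRank D = colRank (D j0) :=
  sum_eq_single j0 (fun j _ hj => h j hj) (by simp)

lemma diagRank_update_canonCol (hzero : ∀ j ≠ j0, colRank (D j) = 0) {t : ℕ}
    (ht : t ≤ #(D j0)) : diagRank (Function.update D j0 (canonCol #(D j0) t)) = t := by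
  rw [diagRank_eq_colRank (j0 := j0) fun j hj => by rw [Function.update_of_ne hj]; exact hzero j hj,
    Function.update_self, colRank_canonCol ht]

lemma subset_Icc_and_diagLE_iff (hD : ∀ j, D j ⊆ Icc 1 n)
    (hzero : ∀ j ≠ j0, colRank (D j) = 0) (h1 : ∀ j, ∀ i ∈ D j, boxRank (D j) i ≤ 1) :
    ((∀ j, C j ⊆ Icc 1 n) ∧ diagLE C D) ↔
      ∃ t ≤ colRank (D j0), C = Function.update D j0 (canonCol #(D j0) t) := by
  have h0 : ∀ {S : Finset ℕ}, S ⊆ Icc 1 n → 0 ∉ S := fun hS h => by simpa using hS h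
  constructor
  · rintro ⟨hC, hle⟩
    refine ⟨colRank (C j0), colRank_le_of_colLE (h0 (hC j0)) (h0 (hD j0)) (hle j0), ?_⟩
    refine Function.eq_update_iff.mpr ⟨?_, fun j hj => ?_⟩
    · rw [← (hle j0).1]
      exact eq_canonCol (h0 (hC j0)) (boxRank_le_one_of_colLE (h0 (hC j0)) (h0 (hD j0)) (h1 j0)
        (hle j0))
    · have := colRank_le_of_colLE (h0 (hC j)) (h0 (hD j)) (hle j)
      exact eq_of_colLE_of_colRank_eq (h0 (hC j)) (h0 (hD j)) (h1 j) (hle j)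
        (by rw [hzero j hj] at this ⊢; omega)
  · rintro ⟨t, ht, rfl⟩
    have hcanon : colLE (canonCol #(D j0) t) (D j0) := colLE_canonCol (h0 (hD j0)) (h1 j0) ht
    refine ⟨fun j => ?_, fun j => ?_⟩ <;> rcases eq_or_ne j j0 with rfl | hj
    · rw [Function.update_self]
      exact subset_Icc_of_colLE zero_notMem_canonCol hcanon (hD j)
    · rw [Function.update_of_ne hj]
      exact hD j
    · rw [Function.update_self]
      exact hcanon
    · rw [Function.update_of_ne hj]
      exact ⟨rfl, fun _ _ _ => le_rfl⟩

end Diagram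

lemma ncard_setOf_eq_succ_of_existsUnique {α : Type*} {P : α → Prop} (r : α → ℕ) {N : ℕ}
    (hr : ∀ a, P a → r a ≤ N) (h : ∀ k ≤ N, ∃! a, P a ∧ r a = k) :
    {a | P a}.ncard = N + 1 := by
  have hinj : Set.InjOn r {a | P a} := fun a ha b hb hab =>
    (h _ (hr a ha)).unique ⟨ha, rfl⟩ ⟨hb, hab.symm⟩
  have himage : r '' {a | P a} = Set.Iic N := by
    ext k
    constructor
    · rintro ⟨a, ha, rfl⟩
      exact hr a ha
    · intro hk
      obtain ⟨a, ⟨ha, rfl⟩, -⟩ := h k hk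
      exact ⟨a, ha, rfl⟩
  rw [← hinj.ncard_image, himage, Set.ncard_Iic_nat]

/-- If all positive-rank boxes of `D` lie in a single column `j₀` and have rank exactly 1,
then for each `k = 0, …, rank(D)` there is exactly one diagram `C ≤ D` with `rank(C) = k`;
in particular `#{C : C ≤ D} = rank(D) + 1`. -/
theorem stmt_14 (n : ℕ) (D : Fin n → Finset ℕ) (hD : ∀ j, D j ⊆ Finset.Icc 1 n)
    (j0 : Fin n)
    (hcol : ∀ j, ∀ i ∈ D j,
      0 < ((Finset.Icc 1 i).filter (fun k => k ∉ D j)).card → j = j0)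
    (hrank1 : ∀ i ∈ D j0, ((Finset.Icc 1 i).filter (fun k => k ∉ D j0)).card ≤ 1) :
    (∀ k ≤ diagRank D, ∃! C : Fin n → Finset ℕ,
      (∀ j, C j ⊆ Finset.Icc 1 n) ∧ diagLE C D ∧ diagRank C = k) ∧
    Set.ncard {C : Fin n → Finset ℕ | (∀ j, C j ⊆ Finset.Icc 1 n) ∧ diagLE C D}
      = diagRank D + 1 := by
  have hbox0 : ∀ j ≠ j0, ∀ i ∈ D j, boxRank (D j) i = 0 := fun j hj i hi =>
    Nat.eq_zero_of_not_pos fun hpos => hj (hcol j i hi hpos)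
  have hzero : ∀ j ≠ j0, colRank (D j) = 0 := fun j hj => sum_eq_zero (hbox0 j hj)
  have h1 : ∀ j, ∀ i ∈ D j, boxRank (D j) i ≤ 1 := fun j i hi => by
    rcases eq_or_ne j j0 with rfl | hj
    exacts [hrank1 i hi, (hbox0 j hj i hi).trans_le zero_le_one]
  have hrank : diagRank D = colRank (D j0) := diagRank_eq_colRank hzero
  have hgood := fun C => subset_Icc_and_diagLE_iff (C := C) hD hzero h1
  have hrank_update := fun t (ht : t ≤ colRank (D j0)) =>
    diagRank_update_canonCol hzero (ht.trans (colRank_le_card (h1 j0)))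
  have hunique : ∀ k ≤ diagRank D, ∃! C : Fin n → Finset ℕ,
      ((∀ j, C j ⊆ Icc 1 n) ∧ diagLE C D) ∧ diagRank C = k := by
    intro k hk
    rw [hrank] at hk
    refine ⟨_, ⟨(hgood _).mpr ⟨k, hk, rfl⟩, hrank_update k hk⟩, fun C ⟨hC, hCk⟩ => ?_⟩
    obtain ⟨t, ht, rfl⟩ := (hgood C).mp hC
    rw [← hCk, hrank_update t ht]
  refine ⟨fun k hk => by simpa only [and_assoc] using hunique k hk,
    ncard_setOf_eq_succ_of_existsUnique diagRank (fun C hC => ?_) hunique⟩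
  obtain ⟨t, ht, rfl⟩ := (hgood C).mp hC
  rw [hrank_update t ht, hrank]
  exact ht
end
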